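/- In the broadcast evolution graph over l rounds (with 2l+1 levels, including unit-capacity selection edges), there is a feasible l-round broadcast schedule delivering each of k tokens from its source to all its destinations, where each node broadcasts at most one token per round, if and only if k edge-capacity-respecting directed Steiner trees can be simultaneously packed, the i-th tree rooted at the level-0 copy of token i's source with terminals the level-2l copies of token i's destinations. -/

import Mathlib

/-!
A schedule gives, for each token `i`, the tree that follows `i` through the evolution graph:
buffer edges wherever a node holds `i`, selection edges wherever a node broadcasts `i`, and,
when a node first receives `i`, one broadcast edge from a single chosen informant (this choice
keeps in-degrees at most one). Conversely, a packing gives the schedule in which a node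
broadcasts the token whose tree uses its selection edge (unique by capacity); induction along
each tree shows that every node at an even level `2r` of tree `i` holds `i` after `r` rounds.
-/

open Classical in
/-- Token holdings under a broadcast schedule `bcast` (in each round each node
broadcasts at most one token to all its neighbors) on the dynamic network `G`,
where token `i` starts at the node `src i`. -/
noncomputable def bRun {V : Type*} (k : ℕ) (G : ℕ → SimpleGraph V) (src : Fin k → V)
    (bcast : ℕ → V → Option (Fin k)) : ℕ → V → Finset (Fin k)
  | 0 => fun v => Finset.univ.filter fun i => src i = v
  | r + 1 => fun v =>
      bRun k G src bcast r v ∪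
        Finset.univ.filter fun i =>
          ∃ u, (G r).Adj u v ∧ bcast r u = some i ∧ i ∈ bRun k G src bcast r u

open Relation

section Run

variable {V : Type*} {k : ℕ} {G : ℕ → SimpleGraph V} {src : Fin k → V}
  {bcast : ℕ → V → Option (Fin k)} {r : ℕ} {v : V} {i : Fin k}

lemma mem_bRun_zero : i ∈ bRun k G src bcast 0 v ↔ src i = v := by
  simp [bRun]

lemma mem_bRun_succ :
    i ∈ bRun k G src bcast (r + 1) v ↔
      i ∈ bRun k G src bcast r v ∨
        ∃ u, (G r).Adj u v ∧ bcast r u = some i ∧ i ∈ bRun k G src bcast r u := by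
  simp [bRun]

lemma mem_bRun_succ_of_mem (h : i ∈ bRun k G src bcast r v) :
    i ∈ bRun k G src bcast (r + 1) v :=
  mem_bRun_succ.mpr (Or.inl h)

end Run

/-- Edges of the broadcast evolution graph over `l` rounds, level `j` of node `v` being the
vertex `(j, v)`: buffer, selection and broadcast edges of round `r + 1`, in this order. -/
def IsEvolutionEdge {V : Type*} (G : ℕ → SimpleGraph V) (l : ℕ)
    (e : (ℕ × V) × (ℕ × V)) : Prop :=
  ∃ r < l,
    (e.1.1 = 2 * r ∧ e.2.1 = 2 * r + 2 ∧ e.1.2 = e.2.2) ∨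
    (e.1.1 = 2 * r ∧ e.2.1 = 2 * r + 1 ∧ e.1.2 = e.2.2) ∨
    (e.1.1 = 2 * r + 1 ∧ e.2.1 = 2 * r + 2 ∧ (G r).Adj e.1.2 e.2.2)

section ScheduleToTrees

variable {V : Type*} {k : ℕ} (G : ℕ → SimpleGraph V) (src : Fin k → V)
  (bcast : ℕ → V → Option (Fin k))

open Classical in
noncomputable def informant (i : Fin k) (r : ℕ) (v : V) : V :=
  if h : ∃ u, (G r).Adj u v ∧ bcast r u = some i ∧ i ∈ bRun k G src bcast r u then h.choose
  else v

variable {G src bcast}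

lemma informant_spec {i : Fin k} {r : ℕ} {v : V} (hnew : i ∉ bRun k G src bcast r v)
    (hrecv : i ∈ bRun k G src bcast (r + 1) v) :
    (G r).Adj (informant G src bcast i r v) v ∧ bcast r (informant G src bcast i r v) = some i ∧
      i ∈ bRun k G src bcast r (informant G src bcast i r v) := by
  have h := (mem_bRun_succ.mp hrecv).resolve_left hnew
  rw [informant, dif_pos h]
  exact h.choose_spec

variable (G src bcast)

inductive ScheduleTree (l : ℕ) (i : Fin k) : (ℕ × V) × (ℕ × V) → Prop
  | buffer {r w} : r < l → i ∈ bRun k G src bcast r w →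
      ScheduleTree l i ((2 * r, w), (2 * r + 2, w))
  | select {r w} : r < l → bcast r w = some i → ScheduleTree l i ((2 * r, w), (2 * r + 1, w))
  | broadcast {r w} : r < l → i ∉ bRun k G src bcast r w → i ∈ bRun k G src bcast (r + 1) w →
      ScheduleTree l i ((2 * r + 1, informant G src bcast i r w), (2 * r + 2, w))

variable {G src bcast} {l : ℕ}

namespace ScheduleTree

lemma isEvolutionEdge {i : Fin k} {e : (ℕ × V) × (ℕ × V)}
    (he : ScheduleTree G src bcast l i e) : IsEvolutionEdge G l e := by
  cases he with
  | buffer hr _ => exact ⟨_, hr, Or.inl ⟨rfl, rfl, rfl⟩⟩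
  | select hr _ => exact ⟨_, hr, Or.inr (Or.inl ⟨rfl, rfl, rfl⟩)⟩
  | broadcast hr hnew hrecv =>
    exact ⟨_, hr, Or.inr (Or.inr ⟨rfl, rfl, (informant_spec hnew hrecv).1⟩)⟩

lemma eq_of_unit_capacity {i j : Fin k} {e : (ℕ × V) × (ℕ × V)}
    (hi : ScheduleTree G src bcast l i e) (hj : ScheduleTree G src bcast l j e)
    (hunit : e.2.1 = e.1.1 + 1) : i = j := by
  generalize hee : e = e' at hj
  cases hi <;> cases hj <;> simp only [Prod.mk.injEq] at hee hunit <;> try omega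
  case select.select r w _ hi r' w' _ hj =>
    obtain ⟨⟨hr, rfl⟩, -⟩ := hee
    obtain rfl : r = r' := by omega
    exact Option.some_injective _ (hi.symm.trans hj)
  case broadcast.broadcast r w _ hnew hrecv r' w' _ hnew' hrecv' =>
    obtain ⟨⟨hr, hinf⟩, -, rfl⟩ := hee
    obtain rfl : r = r' := by omega
    have hi := (informant_spec hnew hrecv).2.1
    rw [hinf, (informant_spec hnew' hrecv').2.1] at hi
    exact (Option.some_injective _ hi).symm

lemma fst_eq_of_snd_eq {i : Fin k} {a a' b : ℕ × V}
    (h : ScheduleTree G src bcast l i (a, b)) (h' : ScheduleTree G src bcast l i (a', b)) :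
    a = a' := by
  generalize hee : (a, b) = e at h
  generalize hee' : (a', b) = e' at h'
  cases h <;> cases h' <;> simp only [Prod.mk.injEq] at hee hee' <;>
    obtain ⟨rfl, rfl⟩ := hee <;> obtain ⟨rfl, hb⟩ := hee' <;> simp only [Prod.mk.injEq] at hb <;>
    try omega
  -- the remaining clash, buffer against broadcast edge, is a node holding `i` before receiving it
  all_goals
    obtain ⟨hr, rfl⟩ := hb
    obtain rfl := Nat.eq_of_mul_eq_mul_left two_pos (Nat.add_right_cancel hr)
    first | rfl | contradiction

lemma reflTransGen_of_mem_bRun {i : Fin k} {r : ℕ} {v : V} (hr : r ≤ l)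
    (h : i ∈ bRun k G src bcast r v) :
    ReflTransGen (fun a b => ScheduleTree G src bcast l i (a, b)) (0, src i) (2 * r, v) := by
  induction r generalizing v with
  | zero =>
    obtain rfl := mem_bRun_zero.mp h
    exact .refl
  | succ r ih =>
    by_cases hold : i ∈ bRun k G src bcast r v
    · exact (ih (by omega) hold).tail (.buffer (by omega) hold)
    · obtain ⟨-, hsel, hmem⟩ := informant_spec hold h
      exact ((ih (by omega) hmem).tail (.select (by omega) hsel)).tail
        (.broadcast (by omega) hold h)

lemma reflTransGen_fst (hholds : ∀ r u i, bcast r u = some i → i ∈ bRun k G src bcast r u)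
    {i : Fin k} {e : (ℕ × V) × (ℕ × V)} (he : ScheduleTree G src bcast l i e) :
    ReflTransGen (fun a b => ScheduleTree G src bcast l i (a, b)) (0, src i) e.1 := by
  cases he with
  | buffer hr hmem => exact reflTransGen_of_mem_bRun hr.le hmem
  | select hr hsel => exact reflTransGen_of_mem_bRun hr.le (hholds _ _ _ hsel)
  | broadcast hr hnew hrecv =>
    obtain ⟨-, hsel, hmem⟩ := informant_spec hnew hrecv
    exact (reflTransGen_of_mem_bRun hr.le hmem).tail (.select hr hsel)

end ScheduleTree

end ScheduleToTrees

section TreesToSchedule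

variable {V : Type*} {k : ℕ}

open Classical in
noncomputable def scheduleOfTrees (E : Fin k → Set ((ℕ × V) × (ℕ × V))) (r : ℕ) (u : V) :
    Option (Fin k) :=
  if h : ∃ i, ((2 * r, u), (2 * r + 1, u)) ∈ E i then some h.choose else none

variable {E : Fin k → Set ((ℕ × V) × (ℕ × V))}

lemma scheduleOfTrees_eq_some_iff
    (hcap : ∀ e : (ℕ × V) × (ℕ × V), e.2.1 = e.1.1 + 1 → {i | e ∈ E i}.Subsingleton)
    {r : ℕ} {u : V} {i : Fin k} :
    scheduleOfTrees E r u = some i ↔ ((2 * r, u), (2 * r + 1, u)) ∈ E i := by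
  by_cases h : ∃ j, ((2 * r, u), (2 * r + 1, u)) ∈ E j
  · rw [scheduleOfTrees, dif_pos h, Option.some_inj]
    exact ⟨fun hj => hj ▸ h.choose_spec, fun hi => hcap _ rfl h.choose_spec hi⟩
  · rw [scheduleOfTrees, dif_neg h]
    exact ⟨nofun, fun hi => absurd ⟨i, hi⟩ h⟩

lemma mem_bRun_scheduleOfTrees {G : ℕ → SimpleGraph V} {l : ℕ} {src : Fin k → V}
    (hvalid : ∀ i, ∀ e ∈ E i, IsEvolutionEdge G l e)
    (hcap : ∀ e : (ℕ × V) × (ℕ × V), e.2.1 = e.1.1 + 1 → {i | e ∈ E i}.Subsingleton)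
    {i : Fin k} {a : ℕ × V}
    (h : ReflTransGen (fun a b => (a, b) ∈ E i) (0, src i) a) :
    (∀ r u, a = (2 * r, u) → i ∈ bRun k G src (scheduleOfTrees E) r u) ∧
      ∀ r u, a = (2 * r + 1, u) →
        ((2 * r, u), (2 * r + 1, u)) ∈ E i ∧ i ∈ bRun k G src (scheduleOfTrees E) r u := by
  induction h with
  | refl =>
    refine ⟨fun r u h => ?_, fun r u h => ?_⟩ <;> simp only [Prod.mk.injEq] at h
    · obtain ⟨hr, rfl⟩ := h
      obtain rfl : r = 0 := by omega
      exact mem_bRun_zero.mpr rfl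
    · omega
  | @tail c b _ hedge ih =>
    obtain ⟨c₁, c₂⟩ := c
    obtain ⟨b₁, b₂⟩ := b
    obtain ⟨s, -, hform⟩ := hvalid i _ hedge
    refine ⟨fun r u h => ?_, fun r u h => ?_⟩ <;> simp only [Prod.mk.injEq] at h <;>
      obtain ⟨rfl, rfl⟩ := h <;> dsimp only at hform
    · rcases hform with ⟨rfl, hr, rfl⟩ | ⟨-, hr, -⟩ | ⟨rfl, hr, hadj⟩
      · obtain rfl : r = s + 1 := by omega
        exact mem_bRun_succ_of_mem (ih.1 s c₂ rfl)
      · omega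
      · obtain rfl : r = s + 1 := by omega
        obtain ⟨hsel, hmem⟩ := ih.2 s c₂ rfl
        exact mem_bRun_succ.mpr
          (.inr ⟨c₂, hadj, (scheduleOfTrees_eq_some_iff hcap).mpr hsel, hmem⟩)
    · rcases hform with ⟨-, hr, -⟩ | ⟨rfl, hr, rfl⟩ | ⟨-, hr, -⟩
      · omega
      · obtain rfl : r = s := by omega
        exact ⟨hedge, ih.1 _ _ rfl⟩
      · omega

end TreesToSchedule

/-- There is a feasible `l`-round broadcast schedule delivering
each token `i` from its source `src i` to all its destinations `dest i` (each node
broadcasting at most one token it holds per round) **iff** `k` directed Steiner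
trees can be packed in the broadcast evolution graph respecting edge capacities.
Vertices of the broadcast evolution graph are pairs `(level, node)` with levels
`0, …, 2l`; the valid edges for round `r+1` (`r < l`) are the infinite-capacity
buffer edges `(2r,v) → (2r+2,v)`, the unit-capacity selection edges
`(2r,v) → (2r+1,v)`, and the unit-capacity broadcast edges `(2r+1,u) → (2r+2,v)`
for `(G r).Adj u v`.  The `i`-th tree `E i` is a set of valid edges forming a
directed tree rooted at `(0, src i)` (in-degree at most one, every edge reachable
from the root) reaching the terminal `(2l, v)` for every `v ∈ dest i`; unit
capacity means each selection/broadcast edge lies in at most one tree. -/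
theorem stmt_16 {V : Type*} (k l : ℕ) (G : ℕ → SimpleGraph V) (src : Fin k → V)
    (dest : Fin k → Finset V) :
    (∃ bcast : ℕ → V → Option (Fin k),
      (∀ r u i, bcast r u = some i → i ∈ bRun k G src bcast r u) ∧
      ∀ i : Fin k, ∀ v ∈ dest i, i ∈ bRun k G src bcast l v) ↔
    (∃ E : Fin k → Set ((ℕ × V) × (ℕ × V)),
      (∀ i, ∀ e ∈ E i, ∃ r < l,
        (e.1.1 = 2 * r ∧ e.2.1 = 2 * r + 2 ∧ e.1.2 = e.2.2) ∨
        (e.1.1 = 2 * r ∧ e.2.1 = 2 * r + 1 ∧ e.1.2 = e.2.2) ∨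
        (e.1.1 = 2 * r + 1 ∧ e.2.1 = 2 * r + 2 ∧ (G r).Adj e.1.2 e.2.2)) ∧
      (∀ e : (ℕ × V) × (ℕ × V), e.2.1 = e.1.1 + 1 → {i | e ∈ E i}.Subsingleton) ∧
      (∀ (i : Fin k) (b : ℕ × V), {a | (a, b) ∈ E i}.Subsingleton) ∧
      (∀ i, ∀ e ∈ E i,
        Relation.ReflTransGen (fun a b => (a, b) ∈ E i) (0, src i) e.1) ∧
      (∀ i : Fin k, ∀ v ∈ dest i,
        Relation.ReflTransGen (fun a b => (a, b) ∈ E i) (0, src i) (2 * l, v))) := by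
  constructor
  · rintro ⟨bcast, hholds, hdeliver⟩
    refine ⟨fun i => {e | ScheduleTree G src bcast l i e}, fun i e he => he.isEvolutionEdge,
      fun e hunit i hi j hj => hi.eq_of_unit_capacity hj hunit,
      fun i b a ha a' ha' => ha.fst_eq_of_snd_eq ha', fun i e he => he.reflTransGen_fst hholds,
      fun i v hv => ScheduleTree.reflTransGen_of_mem_bRun le_rfl (hdeliver i v hv)⟩
  · rintro ⟨E, hvalid, hcap, -, hreach, hterm⟩
    refine ⟨scheduleOfTrees E, fun r u i hsel => ?_, fun i v hv => ?_⟩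
    · have hsel := (scheduleOfTrees_eq_some_iff hcap).mp hsel
      exact (mem_bRun_scheduleOfTrees hvalid hcap (hreach i _ hsel)).1 r u rfl
    · exact (mem_bRun_scheduleOfTrees hvalid hcap (hterm i v hv)).1 l v rfl
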